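/- arXiv:2007.12575 — 3 statements merged into one kernel-verified Lean document; each statement's English description precedes it below -/
import Mathlib

section
/- For every integer k ≥ 1 and all positive definite complex d×d matrices ρ and σ with tr(ρ) = 1, the iterated mean divergence is bounded above by the geometric Rényi divergence of order α_k: D^{im}_{α_k}(ρ‖σ) ≤ (1/(α_k−1))·log tr(ρ^{1/2}(ρ^{−1/2} σ ρ^{−1/2})^{1−α_k} ρ^{1/2}). -/
open Matrix ComplexOrder

/-- `α_k = 1 + 1/(2^k - 1)`. -/
noncomputable def alphaIM (k : ℕ) : ℝ := 1 + 1 / (2 ^ k - 1)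

/-- Feasibility of `(V₁, …, V_k, Z)` for the primal SDP defining the iterated mean
divergence: `Z ≥ 0`, `V₁ + V₁* ≥ 0`, `Vᵢ* Vᵢ ≤ (Vᵢ₊₁ + Vᵢ₊₁*)/2` for `1 ≤ i ≤ k-1`, and
`V_k* V_k ≤ Z`.  The matrices are indexed by `ℕ`, with only indices `1, …, k` relevant. -/
def QimFeasible {n : Type*} [Fintype n] (k : ℕ)
    (V : ℕ → Matrix n n ℂ) (Z : Matrix n n ℂ) : Prop :=
  Z.PosSemidef ∧
  (V 1 + (V 1)ᴴ).PosSemidef ∧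
  (∀ i : ℕ, 1 ≤ i → i < k →
    ((2 : ℂ)⁻¹ • (V (i + 1) + (V (i + 1))ᴴ) - (V i)ᴴ * V i).PosSemidef) ∧
  (Z - (V k)ᴴ * V k).PosSemidef

/-- The objective `α_k · Re tr(ρ (V₁+V₁*)/2) − (α_k − 1) · Re tr(σ Z)`. -/
noncomputable def QimObj {n : Type*} [Fintype n] (k : ℕ)
    (ρ σ : Matrix n n ℂ) (V : ℕ → Matrix n n ℂ) (Z : Matrix n n ℂ) : ℝ :=
  alphaIM k * ((ρ * (V 1 + (V 1)ᴴ)).trace.re / 2) - (alphaIM k - 1) * (σ * Z).trace.re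

/-- The iterated mean quantity `Q^{im}_{α_k}(ρ‖σ)`. -/
noncomputable def Qim {n : Type*} [Fintype n] (k : ℕ) (ρ σ : Matrix n n ℂ) : ℝ :=
  sSup {q : ℝ | ∃ V Z, QimFeasible k V Z ∧ q = QimObj k ρ σ V Z}

/-- The iterated mean divergence `D^{im}_{α_k}(ρ‖σ) = (1/(α_k−1)) log Q^{im}_{α_k}(ρ‖σ)`. -/
noncomputable def Dim {n : Type*} [Fintype n] (k : ℕ) (ρ σ : Matrix n n ℂ) : ℝ :=
  (1 / (alphaIM k - 1)) * Real.log (Qim k ρ σ)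

/-- Real powers of a Hermitian matrix, via the spectral decomposition (continuous
functional calculus); junk value `0` on non-Hermitian matrices. -/
noncomputable def mrpow {n : Type*} [Fintype n] [DecidableEq n]
    (A : Matrix n n ℂ) (r : ℝ) : Matrix n n ℂ :=
  if h : A.IsHermitian then
    (h.eigenvectorUnitary : Matrix n n ℂ) *
      Matrix.diagonal (fun i => ((h.eigenvalues i ^ r : ℝ) : ℂ)) *
      (h.eigenvectorUnitary : Matrix n n ℂ)ᴴ
  else 0

/-- Matrix geometric mean `A # B = A^{1/2} (A^{-1/2} B A^{-1/2})^{1/2} A^{1/2}`. -/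
noncomputable def geomMean {n : Type*} [Fintype n] [DecidableEq n]
    (A B : Matrix n n ℂ) : Matrix n n ℂ :=
  mrpow A (1/2) * mrpow (mrpow A (-(1/2)) * B * mrpow A (-(1/2))) (1/2) * mrpow A (1/2)

/-- Partial trace over the first tensor factor. -/
noncomputable def ptrFst {α β : Type*} [Fintype α] (M : Matrix (α × β) (α × β) ℂ) :
    Matrix β β ℂ :=
  Matrix.of fun b b' => ∑ a, M (a, b) (a, b')

/-- Iterated geometric mean: `iterGeom σ A k = A₁ # (A₂ # (⋯ # (A_k # σ)⋯))`. -/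
noncomputable def iterGeom {n : Type*} [Fintype n] [DecidableEq n]
    (σ : Matrix n n ℂ) : (ℕ → Matrix n n ℂ) → ℕ → Matrix n n ℂ
  | _, 0 => σ
  | A, (j + 1) => geomMean (A 1) (iterGeom σ (fun i => A (i + 1)) j)

/-!
Write `G t = ρ #_t σ = ρ^{1/2} (ρ^{-1/2} σ ρ^{-1/2})^t ρ^{1/2}`, so that `G 0 = ρ`, `G 1 = σ` and
`G s * (G t)⁻¹ * G s = G (2 s - t)`. Completing the square gives, for a feasible `(V, Z)`,
`2 Re tr (G tᵢ Vᵢ) ≤ Re tr (G tᵢ₊₁ Vᵢᴴ Vᵢ) + Re tr (G tᵢ (G tᵢ₊₁)⁻¹ G tᵢ)`, and the constraint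
`Vᵢᴴ Vᵢ ≤ Re Vᵢ₊₁` feeds the first term into the next step. With `tᵢ = (2^(i-1) - 1)/(2^k - 1)`
every remainder term is `tr G (1 - α_k)`, `t₁ = 0` and `t_{k+1} = 1`, so telescoping from `i = 1`
to `k` bounds the objective by `tr G (1 - α_k)`. A feasible scalar chain makes `Q^{im}` positive,
so the logarithm preserves the bound.
-/

namespace Matrix

section Trace

variable {n : Type*} [Fintype n]

lemma re_trace_mul_conjTranspose {M : Matrix n n ℂ} (hM : M.IsHermitian) (V : Matrix n n ℂ) :
    (M * Vᴴ).trace.re = (M * V).trace.re := by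
  rw [← hM.eq, ← conjTranspose_mul, trace_conjTranspose, hM.eq, trace_mul_comm]
  rfl

lemma re_trace_mul_add_conjTranspose {M : Matrix n n ℂ} (hM : M.IsHermitian) (V : Matrix n n ℂ) :
    (M * (V + Vᴴ)).trace.re = 2 * (M * V).trace.re := by
  rw [mul_add, trace_add, Complex.add_re, re_trace_mul_conjTranspose hM]
  ring

lemma re_trace_mul_nonneg {A B : Matrix n n ℂ} (hA : A.PosSemidef) (hB : B.PosSemidef) :
    0 ≤ (A * B).trace.re := by
  classical
  open scoped MatrixOrder in
  obtain ⟨S, rfl⟩ := CStarAlgebra.nonneg_iff_eq_star_mul_self.mp hA.nonneg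
  rw [star_eq_conjTranspose, mul_assoc, trace_mul_comm, mul_assoc, ← mul_assoc]
  exact (Complex.nonneg_iff.mp (hB.mul_mul_conjTranspose_same S).trace_nonneg).1

lemma re_trace_mul_le_re_trace_mul {G A B : Matrix n n ℂ} (hG : G.PosSemidef)
    (hAB : (B - A).PosSemidef) : (G * A).trace.re ≤ (G * B).trace.re := by
  have := re_trace_mul_nonneg hG hAB
  rwa [mul_sub, trace_sub, Complex.sub_re, sub_nonneg] at this

lemma re_trace_mul_half_add_conjTranspose {M : Matrix n n ℂ} (hM : M.IsHermitian)
    (W : Matrix n n ℂ) : (M * ((2 : ℂ)⁻¹ • (W + Wᴴ))).trace.re = (M * W).trace.re := by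
  rw [Matrix.mul_smul, trace_smul, smul_eq_mul, show (2 : ℂ)⁻¹ = ((2⁻¹ : ℝ) : ℂ) by norm_num,
    Complex.re_ofReal_mul, re_trace_mul_add_conjTranspose hM]
  ring

end Trace

variable {n : Type*} [Fintype n] [DecidableEq n]

lemma two_mul_re_trace_mul_le {M N : Matrix n n ℂ} (hM : M.IsHermitian) (hN : N.PosDef)
    (V : Matrix n n ℂ) :
    2 * (M * V).trace.re ≤ (N * (Vᴴ * V)).trace.re + (M * N⁻¹ * M).trace.re := by
  have hdet := (isUnit_iff_isUnit_det N).mp hN.isUnit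
  have hsq := (hN.posSemidef.mul_mul_conjTranspose_same (V - M * N⁻¹)).trace_nonneg
  have hexpand : (V - M * N⁻¹) * N * (V - M * N⁻¹)ᴴ
      = V * N * Vᴴ - V * M - M * Vᴴ + M * N⁻¹ * M := by
    have h : (V - M * N⁻¹) * N * (Vᴴ - N⁻¹ * M)
        = V * N * Vᴴ - V * (N * N⁻¹) * M - M * (N⁻¹ * N) * Vᴴ + M * N⁻¹ * (N * N⁻¹) * M := by
      noncomm_ring
    simp only [mul_nonsing_inv N hdet, nonsing_inv_mul N hdet, mul_one] at h
    rwa [conjTranspose_sub, conjTranspose_mul, hM.eq, hN.isHermitian.inv.eq]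
  rw [hexpand, Complex.nonneg_iff] at hsq
  have hVNV : (V * N * Vᴴ).trace = (N * (Vᴴ * V)).trace := by
    rw [trace_mul_cycle, trace_mul_comm]
  simp only [trace_add, trace_sub, Complex.add_re, Complex.sub_re, hVNV,
    trace_mul_comm V M, re_trace_mul_conjTranspose hM] at hsq
  linarith [hsq.1]

lemma PosDef.mul_mul_self_of_posDef {B R : Matrix n n ℂ} (hB : B.PosDef) (hR : R.PosDef) :
    (R * B * R).PosDef := by
  simpa [hR.isHermitian.eq] using
    hB.mul_mul_conjTranspose_same (vecMul_injective_iff_isUnit.mpr hR.isUnit)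

lemma PosDef.pos_of_mem_spectrum {A : Matrix n n ℂ} (hA : A.PosDef) {x : ℝ}
    (hx : x ∈ spectrum ℝ A) : 0 < x := by
  obtain ⟨i, rfl⟩ := hA.isHermitian.spectrum_real_eq_range_eigenvalues ▸ hx
  exact hA.eigenvalues_pos i

end Matrix

section MatrixPower

variable {n : Type*} [Fintype n] [DecidableEq n] {A : Matrix n n ℂ}

lemma mrpow_eq_cfc (hA : A.IsHermitian) (r : ℝ) : mrpow A r = cfc (fun x : ℝ => x ^ r) A := by
  rw [hA.cfc_eq, IsHermitian.cfc, mrpow, dif_pos hA]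
  rfl

lemma mrpow_mul_mrpow (hA : A.PosDef) (r s : ℝ) :
    mrpow A r * mrpow A s = mrpow A (r + s) := by
  have hfin := A.finite_real_spectrum
  rw [mrpow_eq_cfc hA.isHermitian, mrpow_eq_cfc hA.isHermitian, mrpow_eq_cfc hA.isHermitian,
    ← cfc_mul _ _ _ (hfin.continuousOn _) (hfin.continuousOn _)]
  exact cfc_congr fun x hx => (Real.rpow_add (hA.pos_of_mem_spectrum hx) r s).symm

lemma mrpow_zero (hA : A.IsHermitian) : mrpow A 0 = 1 := by
  simp only [mrpow_eq_cfc hA, Real.rpow_zero]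
  exact cfc_const_one ℝ A

lemma mrpow_one (hA : A.IsHermitian) : mrpow A 1 = A := by
  simp only [mrpow_eq_cfc hA, Real.rpow_one]
  exact cfc_id' ℝ A

lemma mrpow_posDef (hA : A.PosDef) (r : ℝ) : (mrpow A r).PosDef := by
  rw [mrpow, dif_pos hA.isHermitian, ← Matrix.star_eq_conjTranspose,
    IsUnit.posDef_star_right_conjugate_iff Unitary.isUnit_coe, posDef_diagonal_iff]
  intro i
  exact_mod_cast Real.rpow_pos_of_pos (hA.eigenvalues_pos i) r

lemma mrpow_inv (hA : A.PosDef) (r : ℝ) : (mrpow A r)⁻¹ = mrpow A (-r) :=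
  inv_eq_left_inv <| by rw [mrpow_mul_mrpow hA, neg_add_cancel, mrpow_zero hA.isHermitian]

end MatrixPower

section WeightedGeomMean

variable {n : Type*} [Fintype n] [DecidableEq n]

noncomputable def weightedGeomMean (A B : Matrix n n ℂ) (t : ℝ) : Matrix n n ℂ :=
  mrpow A (1/2) * mrpow (mrpow A (-(1/2)) * B * mrpow A (-(1/2))) t * mrpow A (1/2)

variable {A B : Matrix n n ℂ} (hA : A.PosDef) (hB : B.PosDef)
include hA

lemma mrpow_half_mul_mrpow_neg_half : mrpow A (1/2) * mrpow A (-(1/2)) = 1 := by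
  rw [mrpow_mul_mrpow hA, add_neg_cancel, mrpow_zero hA.isHermitian]

lemma mrpow_neg_half_mul_mrpow_half : mrpow A (-(1/2)) * mrpow A (1/2) = 1 := by
  rw [mrpow_mul_mrpow hA, neg_add_cancel, mrpow_zero hA.isHermitian]

include hB

lemma posDef_mrpow_neg_half_conj : (mrpow A (-(1/2)) * B * mrpow A (-(1/2))).PosDef :=
  hB.mul_mul_self_of_posDef (mrpow_posDef hA _)

lemma weightedGeomMean_posDef (t : ℝ) : (weightedGeomMean A B t).PosDef :=
  (mrpow_posDef (posDef_mrpow_neg_half_conj hA hB) t).mul_mul_self_of_posDef (mrpow_posDef hA _)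

lemma weightedGeomMean_zero : weightedGeomMean A B 0 = A := by
  rw [weightedGeomMean, mrpow_zero (posDef_mrpow_neg_half_conj hA hB).isHermitian, mul_one,
    mrpow_mul_mrpow hA]
  norm_num [mrpow_one hA.isHermitian]

lemma weightedGeomMean_one : weightedGeomMean A B 1 = B := by
  rw [weightedGeomMean, mrpow_one (posDef_mrpow_neg_half_conj hA hB).isHermitian]
  calc mrpow A (1/2) * (mrpow A (-(1/2)) * B * mrpow A (-(1/2))) * mrpow A (1/2)
      = (mrpow A (1/2) * mrpow A (-(1/2))) * B * (mrpow A (-(1/2)) * mrpow A (1/2)) := by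
        simp only [mul_assoc]
    _ = B := by
      rw [mrpow_half_mul_mrpow_neg_half hA, mrpow_neg_half_mul_mrpow_half hA, one_mul, mul_one]

lemma weightedGeomMean_mul_inv_mul (s t : ℝ) :
    weightedGeomMean A B s * (weightedGeomMean A B t)⁻¹ * weightedGeomMean A B s =
      weightedGeomMean A B (2 * s - t) := by
  have hX := posDef_mrpow_neg_half_conj hA hB
  have hRR' := mrpow_half_mul_mrpow_neg_half hA
  have hR'R := mrpow_neg_half_mul_mrpow_half hA
  simp only [weightedGeomMean, Matrix.mul_inv_rev, mrpow_inv hA, mrpow_inv hX]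
  generalize mrpow A (-(1/2)) * B * mrpow A (-(1/2)) = X at hX ⊢
  generalize mrpow A (1/2) = R at hRR' hR'R ⊢
  generalize mrpow A (-(1/2)) = R' at hRR' hR'R ⊢
  calc R * mrpow X s * R * (R' * (mrpow X (-t) * R')) * (R * mrpow X s * R)
      = R * (mrpow X s * (R * R') * mrpow X (-t) * (R' * R) * mrpow X s) * R := by
        simp only [mul_assoc]
    _ = R * mrpow X (2 * s - t) * R := by
      rw [hRR', hR'R, mul_one, mul_one, mrpow_mul_mrpow hX, mrpow_mul_mrpow hX]
      ring_nf

end WeightedGeomMean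

section Qim

variable {n : Type*} [Fintype n] [DecidableEq n]

lemma two_pow_sub_one_pos {k : ℕ} (hk : 1 ≤ k) : (0 : ℝ) < 2 ^ k - 1 :=
  sub_pos.2 (one_lt_pow₀ one_lt_two (by omega))

lemma QimFeasible.two_pow_mul_re_trace_le {k : ℕ} {V : ℕ → Matrix n n ℂ} {Z : Matrix n n ℂ}
    (h : QimFeasible k V Z) {G : ℕ → Matrix n n ℂ} {P : Matrix n n ℂ}
    (hG : ∀ i, (G i).PosDef) (hP : ∀ i, G i * (G (i + 1))⁻¹ * G i = P)
    {i : ℕ} (hi : 1 ≤ i) (hik : i ≤ k) :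
    2 ^ (k + 1 - i) * (G i * V i).trace.re ≤
      (G (k + 1) * Z).trace.re + (2 ^ (k + 1 - i) - 1) * P.trace.re := by
  obtain ⟨-, -, hlink, hlast⟩ := h
  have hstep (i : ℕ) :
      2 * (G i * V i).trace.re ≤ (G (i + 1) * ((V i)ᴴ * V i)).trace.re + P.trace.re := by
    simpa only [hP] using two_mul_re_trace_mul_le (hG i).isHermitian (hG (i + 1)) (V i)
  induction hik using Nat.decreasingInduction with
  | self =>
    have hZ := re_trace_mul_le_re_trace_mul (hG (k + 1)).posSemidef hlast
    rw [Nat.add_sub_cancel_left]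
    linarith [hstep k]
  | of_succ i hik ih =>
    have hVi := re_trace_mul_le_re_trace_mul (hG (i + 1)).posSemidef (hlink i hi hik)
    rw [re_trace_mul_half_add_conjTranspose (hG (i + 1)).isHermitian] at hVi
    have ih := ih (by omega)
    rw [show k + 1 - i = k + 1 - (i + 1) + 1 by omega, pow_succ]
    have := mul_le_mul_of_nonneg_left (hstep i |>.trans (add_le_add_left hVi _))
      (pow_nonneg zero_le_two (k + 1 - (i + 1)))
    linarith

theorem QimObj_le_re_trace_weightedGeomMean {k : ℕ} (hk : 1 ≤ k) {ρ σ : Matrix n n ℂ}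
    (hρ : ρ.PosDef) (hσ : σ.PosDef) {V : ℕ → Matrix n n ℂ} {Z : Matrix n n ℂ}
    (h : QimFeasible k V Z) :
    QimObj k ρ σ V Z ≤ (weightedGeomMean ρ σ (1 - alphaIM k)).trace.re := by
  have hD := two_pow_sub_one_pos hk
  -- exponents with `t 1 = 0`, `t (k + 1) = 1` and `2 * t i - t (i + 1) = 1 - α_k`
  set t : ℕ → ℝ := fun i => (2 ^ i / 2 - 1) / (2 ^ k - 1)
  have hchain := h.two_pow_mul_re_trace_le (G := fun i => weightedGeomMean ρ σ (t i))
    (P := weightedGeomMean ρ σ (1 - alphaIM k))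
    (fun _ => weightedGeomMean_posDef hρ hσ _)
    (fun i => by
      rw [weightedGeomMean_mul_inv_mul hρ hσ]
      congr 1
      simp only [t, alphaIM]
      field_simp
      ring)
    le_rfl hk
  have ht1 : t 1 = 0 := by simp [t]
  have htk : t (k + 1) = 1 := by simp [t, pow_succ, hD.ne']
  simp only [ht1, htk, weightedGeomMean_zero hρ hσ, weightedGeomMean_one hρ hσ,
    Nat.add_sub_cancel] at hchain
  generalize (weightedGeomMean ρ σ (1 - alphaIM k)).trace.re = T at hchain ⊢
  rw [QimObj, re_trace_mul_add_conjTranspose hρ.isHermitian, alphaIM,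
    show ∀ x z : ℝ, (1 + 1 / (2 ^ k - 1)) * (2 * x / 2) - (1 + 1 / (2 ^ k - 1) - 1) * z
      = (2 ^ k * x - z) / (2 ^ k - 1) from fun x z => by field_simp; ring,
    div_le_iff₀ hD]
  linarith

lemma exists_QimObj_pos {k : ℕ} (hk : 1 ≤ k) {ρ σ : Matrix n n ℂ} (hρ : 0 < ρ.trace.re)
    (hσ : 0 ≤ σ.trace.re) : ∃ V Z, QimFeasible k V Z ∧ 0 < QimObj k ρ σ V Z := by
  set r := ρ.trace.re
  set s := σ.trace.re
  set β := 1 / ((2 : ℝ) ^ k - 1)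
  have hβ : 0 < β := one_div_pos.mpr (two_pow_sub_one_pos hk)
  set τ := alphaIM k * r / (alphaIM k * r + β * s)
  have hαr : 0 < alphaIM k * r := mul_pos (by simp only [alphaIM]; linarith) hρ
  have hβs : 0 ≤ β * s := mul_nonneg hβ.le hσ
  have hτ0 : 0 < τ := div_pos hαr (by linarith)
  have hτ1 : τ ≤ 1 := div_le_one_of_le₀ (by linarith) (by linarith)
  have hτs : β * s * τ < alphaIM k * r := by
    rw [mul_div_assoc', div_lt_iff₀ (by linarith)]
    nlinarith
  -- the scalar chain `Vᵢ = τ^(2^i)`, `Z = τ^(2^(k+1))` is feasible with equality throughout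
  let c (i : ℕ) : Matrix n n ℂ := ((τ ^ 2 ^ i : ℝ) : ℂ) • 1
  have hc (i : ℕ) : (c i)ᴴ = c i := by simp [c]
  have hc_mul (i : ℕ) : (c i)ᴴ * c i = c (i + 1) := by
    simp only [hc, c, smul_mul_smul, mul_one, ← Complex.ofReal_mul, ← pow_add, ← two_mul,
      ← pow_succ']
  have hc_psd (i : ℕ) : (c i).PosSemidef :=
    PosSemidef.one.smul (Complex.zero_le_real.mpr (pow_pos hτ0 _).le)
  have hc_trace (M : Matrix n n ℂ) (i : ℕ) : (M * c i).trace.re = τ ^ 2 ^ i * M.trace.re := by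
    simp only [c, Matrix.mul_smul, mul_one, trace_smul, smul_eq_mul, Complex.re_ofReal_mul]
  refine ⟨c, c (k + 1),
    ⟨hc_psd _, by simpa [hc] using (hc_psd 1).add (hc_psd 1), fun i _ _ => ?_, ?_⟩, ?_⟩
  · rw [hc, hc_mul, ← two_smul ℂ, smul_smul, inv_mul_cancel₀ two_ne_zero, one_smul, sub_self]
    exact .zero
  · rw [hc_mul, sub_self]
    exact .zero
  · have hpow : τ ^ 2 ^ (k + 1) ≤ τ ^ 3 := pow_le_pow_of_le_one hτ0.le hτ1 (by
      calc 3 ≤ 2 ^ 2 := by norm_num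
        _ ≤ 2 ^ (k + 1) := Nat.pow_le_pow_right two_pos (by omega))
    rw [QimObj, hc, mul_add, trace_add, Complex.add_re, hc_trace, hc_trace,
      show alphaIM k - 1 = β from add_sub_cancel_left 1 β]
    nlinarith [mul_le_mul_of_nonneg_left hpow hβs, mul_pos (pow_pos hτ0 2) (sub_pos.mpr hτs)]

lemma re_trace_weightedGeomMean_mem_upperBounds {k : ℕ} (hk : 1 ≤ k) {ρ σ : Matrix n n ℂ}
    (hρ : ρ.PosDef) (hσ : σ.PosDef) :
    (weightedGeomMean ρ σ (1 - alphaIM k)).trace.re ∈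
      upperBounds {q | ∃ V Z, QimFeasible k V Z ∧ q = QimObj k ρ σ V Z} := by
  rintro _ ⟨V, Z, h, rfl⟩
  exact QimObj_le_re_trace_weightedGeomMean hk hρ hσ h

lemma Qim_le_re_trace_weightedGeomMean {k : ℕ} (hk : 1 ≤ k) {ρ σ : Matrix n n ℂ}
    (hρ : ρ.PosDef) (hσ : σ.PosDef) : Qim k ρ σ ≤ (weightedGeomMean ρ σ (1 - alphaIM k)).trace.re :=
  Real.sSup_le (re_trace_weightedGeomMean_mem_upperBounds hk hρ hσ)
    (Complex.nonneg_iff.mp (weightedGeomMean_posDef hρ hσ _).posSemidef.trace_nonneg).1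

lemma Qim_pos [Nonempty n] {k : ℕ} (hk : 1 ≤ k) {ρ σ : Matrix n n ℂ} (hρ : ρ.PosDef)
    (hσ : σ.PosDef) : 0 < Qim k ρ σ := by
  obtain ⟨V, Z, h, hpos⟩ := exists_QimObj_pos hk (Complex.pos_iff.mp hρ.trace_pos).1
    (Complex.nonneg_iff.mp hσ.posSemidef.trace_nonneg).1
  exact hpos.trans_le
    (le_csSup ⟨_, re_trace_weightedGeomMean_mem_upperBounds hk hρ hσ⟩ ⟨V, Z, h, rfl⟩)

end Qim

theorem stmt_7_general (d k : ℕ) (ρ σ : Matrix (Fin d) (Fin d) ℂ)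
    (hρ : ρ.PosDef) (hσ : σ.PosDef) :
    Dim k ρ σ ≤
      (1 / (alphaIM k - 1)) * Real.log
        ((mrpow ρ (1/2) *
          mrpow (mrpow ρ (-(1/2)) * σ * mrpow ρ (-(1/2))) (1 - alphaIM k) *
          mrpow ρ (1/2)).trace.re) := by
  -- `α_0 = 1`, so both sides carry the junk factor `1 / 0 = 0`
  obtain rfl | hk := Nat.eq_zero_or_pos k
  · simp [Dim, alphaIM]
  -- for `d = 0` every trace vanishes, so both logarithms are `log 0 = 0`
  obtain hd | hd := isEmpty_or_nonempty (Fin d)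
  · have hQ : Qim k ρ σ = 0 := by
      have hS : ∀ q ∈ {q | ∃ V Z, QimFeasible k V Z ∧ q = QimObj k ρ σ V Z}, q = 0 := by
        rintro _ ⟨V, Z, -, rfl⟩
        simp [QimObj]
      exact le_antisymm (Real.sSup_nonpos fun q hq => (hS q hq).le)
        (Real.sSup_nonneg fun q hq => (hS q hq).ge)
    simp [Dim, hQ]
  exact mul_le_mul_of_nonneg_left
    (Real.log_le_log (Qim_pos hk hρ hσ) (Qim_le_re_trace_weightedGeomMean hk hρ hσ))
    (by simpa [alphaIM] using (two_pow_sub_one_pos hk).le)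

/-- the iterated mean divergence is bounded above by the geometric Rényi
divergence of order `α_k`. -/
theorem stmt_7 (d k : ℕ) (hk : 1 ≤ k) (ρ σ : Matrix (Fin d) (Fin d) ℂ)
    (hρ : ρ.PosDef) (hρtr : ρ.trace = 1) (hσ : σ.PosDef) :
    Dim k ρ σ ≤
      (1 / (alphaIM k - 1)) * Real.log
        ((mrpow ρ (1/2) *
          mrpow (mrpow ρ (-(1/2)) * σ * mrpow ρ (-(1/2))) (1 - alphaIM k) *
          mrpow ρ (1/2)).trace.re) :=
  stmt_7_general d k ρ σ hρ hσ
end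

section
/- For every complex d×d density matrix ρ and every positive definite complex d×d matrix σ, the iterated mean quantity with k = 1 (so α₁ = 2) is bounded by the Petz quantity of order 2: Q^{im}_{2}(ρ‖σ) ≤ tr(ρ² σ⁻¹), and consequently D^{im}_{2}(ρ‖σ) ≤ log tr(ρ² σ⁻¹). -/
open Matrix ComplexOrder

/-! For `k = 1` the objective is `tr ρ(V + Vᴴ) - tr σZ` and only `VᴴV ≤ Z` matters, so it is at
most `tr ρ(V + Vᴴ) - tr σVᴴV`. Completing the square, this equals
`tr ρ²σ⁻¹ - tr (Vσ - ρ)σ⁻¹(Vσ - ρ)ᴴ ≤ tr ρ²σ⁻¹`. For the logarithmic bound `Q` must be positive,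
which the scalar feasible point `V = (tr σ)⁻¹ • 1` witnesses when `tr ρ = 1`. -/

open scoped MatrixOrder

namespace Matrix

variable {𝕜 n : Type*} [RCLike 𝕜] [Fintype n]

lemma PosSemidef.trace_mul_nonneg {A B : Matrix n n 𝕜} (hA : A.PosSemidef)
    (hB : B.PosSemidef) : 0 ≤ (A * B).trace := by
  classical
  obtain ⟨C, rfl⟩ := CStarAlgebra.nonneg_iff_eq_star_mul_self.mp hA.nonneg
  rw [star_eq_conjTranspose, Matrix.mul_assoc, trace_mul_comm]
  exact (hB.mul_mul_conjTranspose_same C).trace_nonneg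

variable [DecidableEq n]

lemma trace_mul_add_conjTranspose_sub_le {ρ σ : Matrix n n 𝕜} (hρ : ρ.IsHermitian)
    (hσ : σ.PosDef) (V : Matrix n n 𝕜) :
    (ρ * (V + Vᴴ)).trace - (σ * (Vᴴ * V)).trace ≤ (ρ * ρ * σ⁻¹).trace := by
  have hdet : IsUnit σ.det := (isUnit_iff_isUnit_det σ).mp hσ.isUnit
  have hsq : (V * σ - ρ) * σ⁻¹ * (V * σ - ρ)ᴴ = V * σ * Vᴴ - V * ρ - ρ * Vᴴ + ρ * σ⁻¹ * ρ := by
    rw [conjTranspose_sub, conjTranspose_mul, hσ.isHermitian.eq, hρ.eq]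
    simp only [sub_mul, mul_sub, Matrix.mul_assoc, nonsing_inv_mul_cancel_left σ _ hdet,
      mul_nonsing_inv_cancel_left σ _ hdet]
    abel
  have hgap := (hσ.inv.posSemidef.mul_mul_conjTranspose_same (V * σ - ρ)).trace_nonneg
  have htr : (V * σ * Vᴴ - V * ρ - ρ * Vᴴ + ρ * σ⁻¹ * ρ).trace
      = (ρ * ρ * σ⁻¹).trace - ((ρ * (V + Vᴴ)).trace - (σ * (Vᴴ * V)).trace) := by
    rw [trace_add, trace_sub, trace_sub, trace_mul_cycle V, trace_mul_comm (Vᴴ * V),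
      trace_mul_comm V ρ, trace_mul_cycle ρ σ⁻¹ ρ, Matrix.mul_add, trace_add]
    abel
  rwa [hsq, htr, sub_nonneg] at hgap

end Matrix

open Matrix

section

variable {n : Type*} [Fintype n]

def QimValues (k : ℕ) (ρ σ : Matrix n n ℂ) : Set ℝ :=
  {q : ℝ | ∃ V Z, QimFeasible k V Z ∧ q = QimObj k ρ σ V Z}

lemma Qim_eq_sSup_QimValues (k : ℕ) (ρ σ : Matrix n n ℂ) :
    Qim k ρ σ = sSup (QimValues k ρ σ) :=
  rfl

lemma QimObj_one (ρ σ : Matrix n n ℂ) (V : ℕ → Matrix n n ℂ) (Z : Matrix n n ℂ) :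
    QimObj 1 ρ σ V Z = ((ρ * (V 1 + (V 1)ᴴ)).trace - (σ * Z).trace).re := by
  simp only [QimObj, alphaIM, Complex.sub_re]
  norm_num
  ring

lemma Dim_one (ρ σ : Matrix n n ℂ) : Dim 1 ρ σ = Real.log (Qim 1 ρ σ) := by
  norm_num [Dim, alphaIM]

variable [DecidableEq n]

lemma qimFeasible_one_smul_one {c : ℝ} (hc : 0 ≤ c) :
    QimFeasible 1 (fun _ ↦ (c : ℂ) • (1 : Matrix n n ℂ)) ((c : ℂ) ^ 2 • 1) := by
  have hc' : (0 : ℂ) ≤ c := Complex.zero_le_real.mpr hc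
  have hV : ((c : ℂ) • (1 : Matrix n n ℂ))ᴴ = (c : ℂ) • 1 := by
    simp [conjTranspose_smul]
  refine ⟨PosSemidef.one.smul (pow_nonneg hc' 2), ?_, fun _ _ _ ↦ by omega, ?_⟩
  · rw [hV, ← two_smul ℂ, smul_smul]
    exact PosSemidef.one.smul (mul_nonneg zero_le_two hc')
  · rw [hV, smul_mul_smul_comm, Matrix.one_mul, sq, sub_self]
    exact .zero

lemma QimObj_one_smul_one (ρ σ : Matrix n n ℂ) (c : ℝ) :
    QimObj 1 ρ σ (fun _ ↦ (c : ℂ) • 1) ((c : ℂ) ^ 2 • 1)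
      = 2 * c * ρ.trace.re - c ^ 2 * σ.trace.re := by
  simp [QimObj_one, conjTranspose_smul, trace_smul, ← two_smul ℂ, sq]
  ring

variable {ρ σ : Matrix n n ℂ}

lemma QimObj_one_le (hρ : ρ.IsHermitian) (hσ : σ.PosDef) {V : ℕ → Matrix n n ℂ}
    {Z : Matrix n n ℂ} (hVZ : QimFeasible 1 V Z) :
    QimObj 1 ρ σ V Z ≤ (ρ * ρ * σ⁻¹).trace.re := by
  obtain ⟨-, -, -, hZV⟩ := hVZ
  have hσZ : (σ * ((V 1)ᴴ * V 1)).trace ≤ (σ * Z).trace := by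
    have := hσ.posSemidef.trace_mul_nonneg hZV
    rwa [Matrix.mul_sub, trace_sub, sub_nonneg] at this
  rw [QimObj_one]
  exact (Complex.le_def.mp <| (sub_le_sub_left hσZ _).trans <|
    trace_mul_add_conjTranspose_sub_le hρ hσ _).1

lemma bddAbove_QimValues_one (hρ : ρ.IsHermitian) (hσ : σ.PosDef) :
    BddAbove (QimValues 1 ρ σ) :=
  ⟨_, by rintro q ⟨V, Z, hVZ, rfl⟩; exact QimObj_one_le hρ hσ hVZ⟩

lemma Qim_one_le (hρ : ρ.IsHermitian) (hσ : σ.PosDef) :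
    Qim 1 ρ σ ≤ (ρ * ρ * σ⁻¹).trace.re := by
  rw [Qim_eq_sSup_QimValues]
  exact csSup_le ⟨_, _, _, qimFeasible_one_smul_one (c := 0) le_rfl, rfl⟩
    fun _ ⟨_, _, hVZ, hq⟩ ↦ hq ▸ QimObj_one_le hρ hσ hVZ

lemma Qim_one_pos (hρ : ρ.IsHermitian) (hρtr : ρ.trace = 1) (hσ : σ.PosDef) :
    0 < Qim 1 ρ σ := by
  have : Nonempty n := by
    by_contra h
    rw [not_nonempty_iff] at h
    simp [trace_eq_zero_of_isEmpty] at hρtr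
  have htr : 0 < σ.trace.re := (Complex.pos_iff.mp hσ.trace_pos).1
  -- `c = (tr σ)⁻¹` maximises `2c - c² tr σ`
  set c := σ.trace.re⁻¹ with hc
  have hval : QimObj 1 ρ σ (fun _ ↦ (c : ℂ) • 1) ((c : ℂ) ^ 2 • 1) = c := by
    rw [QimObj_one_smul_one, hρtr, Complex.one_re, hc]
    field_simp
    ring
  calc 0 < c := inv_pos.mpr htr
    _ ≤ Qim 1 ρ σ := Qim_eq_sSup_QimValues 1 ρ σ ▸ le_csSup (bddAbove_QimValues_one hρ hσ)
      ⟨_, _, qimFeasible_one_smul_one (inv_nonneg.mpr htr.le), hval.symm⟩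

end

/-- `Q^{im}_2(ρ‖σ) ≤ tr(ρ² σ⁻¹)` and `D^{im}_2(ρ‖σ) ≤ log tr(ρ² σ⁻¹)`. -/
theorem stmt_11 (d : ℕ) (ρ σ : Matrix (Fin d) (Fin d) ℂ)
    (hρ : ρ.PosSemidef) (hρtr : ρ.trace = 1) (hσ : σ.PosDef) :
    Qim 1 ρ σ ≤ (ρ * ρ * σ⁻¹).trace.re ∧
    Dim 1 ρ σ ≤ Real.log ((ρ * ρ * σ⁻¹).trace.re) := by
  have hQ := Qim_one_le hρ.isHermitian hσ
  refine ⟨hQ, ?_⟩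
  rw [Dim_one]
  exact Real.log_le_log (Qim_one_pos hρ.isHermitian hρtr hσ) hQ
end

section
/- For every integer k ≥ 1, every complex d×d density matrix ρ and every nonzero positive semidefinite d×d matrix σ with supp(ρ) ⊆ supp(σ), the iterated mean quantity is strictly positive: Q^{im}_{α_k}(ρ‖σ) > 0. Specifically, for every real c with 0 < c < (2^{1−2^k}·(α_k/(α_k−1))·tr(ρ)/tr(σ))^{1/(2^k−1)}, the point Vᵢ = 2^{2^{i−1}−1}·c^{2^{i−1}}·I (1 ≤ i ≤ k), Z = 2^{2^k−1}·c^{2^k}·I is feasible for the defining program and has strictly positive objective value α_k·c·tr(ρ) − (α_k−1)·2^{2^k−1}·c^{2^k}·tr(σ). -/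
/-!
The scalar points in the statement are feasible because their entries satisfy `vᵢ² ≤ vᵢ₊₁`, but
they bound `Q^{im}` from below only because the supremum is finite (an unbounded `sSup` is `0`).
For finiteness, `supp ρ ⊆ supp σ` gives `ρ ≤ λ σ`, and AM–GM linearises each constraint:
`Re tr(ρ Vᵢ) ≤ tr ρ / (2s) + (s/2) Re tr(ρ Vᵢᴴ Vᵢ) ≤ tr ρ / (2s) + (s/2) Re tr(ρ Vᵢ₊₁)`.
Unrolled, the objective is at most `α tr ρ / s + (α s λ / 2 - (α - 1)) tr(σ Z)`, which is bounded
for small `s`.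
-/

open Matrix ComplexOrder

section MatrixOrder
open scoped MatrixOrder

variable {𝕜 n : Type*} [RCLike 𝕜] [Fintype n]

/-- `P = 1_{t ≠ 0}(σ)`; as the spectrum is finite, `1 / m` can be taken to be the least nonzero
eigenvalue of `σ`. -/
theorem Matrix.PosSemidef.exists_isStarProjection_mul_eq_le_smul [DecidableEq n]
    {σ : Matrix n n 𝕜} (hσ : σ.PosSemidef) :
    ∃ P : Matrix n n 𝕜, IsStarProjection P ∧ σ * P = σ ∧ ∃ m : ℝ, P ≤ m • σ := by
  have hcont (f : ℝ → ℝ) : ContinuousOn f (spectrum ℝ σ) :=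
    σ.finite_real_spectrum.continuousOn f
  set p : ℝ → ℝ := fun t => if t = 0 then 0 else 1
  have hPP : cfc p σ * cfc p σ = cfc p σ := by
    rw [← cfc_mul _ _ σ (hcont _) (hcont _)]
    exact cfc_congr fun t _ => by by_cases ht : t = 0 <;> simp [p, ht]
  have hσP : σ * cfc p σ = σ := by
    calc σ * cfc p σ = cfc (fun t => t * p t) σ := by
          rw [cfc_mul _ _ σ (hcont _) (hcont _), cfc_id' ℝ σ]
      _ = cfc (fun t => t) σ := cfc_congr fun t _ => by by_cases ht : t = 0 <;> simp [p, ht]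
      _ = σ := cfc_id' ℝ σ
  obtain ⟨m, hm⟩ := (σ.finite_real_spectrum.image (·⁻¹)).bddAbove
  refine ⟨cfc p σ, ⟨hPP, cfc_predicate p σ⟩, hσP, m, ?_⟩
  rw [← cfc_const_mul_id m σ hσ.1]
  refine cfc_mono (fun t ht => ?_) (hcont _) (hcont _)
  by_cases h0 : t = 0
  · simp [p, h0]
  · have htpos : 0 < t := (spectrum_nonneg_of_nonneg hσ.nonneg ht).lt_of_ne (Ne.symm h0)
    have := (inv_le_iff_one_le_mul₀ htpos).mp (hm ⟨t, ht, rfl⟩)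
    simpa [p, h0] using this

/-- The support condition gives `ρ = P ρ P` for the projection `P` onto the range of `σ`,
so `ρ ≤ c • 1` compresses to `ρ ≤ c • P ≤ c m • σ`. -/
theorem Matrix.PosSemidef.exists_le_smul_of_ker_le [DecidableEq n] {ρ σ : Matrix n n 𝕜}
    (hρ : ρ.PosSemidef) (hσ : σ.PosSemidef) (hker : ∀ x, σ *ᵥ x = 0 → ρ *ᵥ x = 0) :
    ∃ l : ℝ, ρ ≤ l • σ := by
  obtain ⟨P, hP, hσP, m, hPσ⟩ := hσ.exists_isStarProjection_mul_eq_le_smul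
  have hρP : ρ * P = ρ := by
    have : ρ * (1 - P) = 0 := by
      refine ext_iff_mulVec.mpr fun x => ?_
      rw [zero_mulVec, ← mulVec_mulVec]
      refine hker _ ?_
      rw [mulVec_mulVec, mul_sub, mul_one, hσP, sub_self, zero_mulVec]
    rwa [mul_sub, mul_one, sub_eq_zero, eq_comm] at this
  have hPρ : P * ρ = ρ := by
    simpa only [star_mul, hP.isSelfAdjoint.star_eq, hρ.isHermitian.isSelfAdjoint.star_eq]
      using congrArg star hρP
  obtain ⟨c, hc⟩ := ρ.finite_real_spectrum.bddAbove
  have hρc : ρ ≤ algebraMap ℝ _ (max c 0) :=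
    le_algebraMap_of_spectrum_le (fun x hx => (hc hx).trans (le_max_left _ _)) hρ.1
  refine ⟨max c 0 * m, ?_⟩
  calc ρ = star P * ρ * P := by rw [hP.isSelfAdjoint.star_eq, hPρ, hρP]
    _ ≤ star P * algebraMap ℝ _ (max c 0) * P := star_left_conjugate_le_conjugate hρc P
    _ = max c 0 • P := by
      rw [hP.isSelfAdjoint.star_eq, Algebra.algebraMap_eq_smul_one, mul_smul_comm, mul_one,
        smul_mul_assoc, hP.isIdempotentElem.eq]
    _ ≤ max c 0 • (m • σ) := smul_le_smul_of_nonneg_left hPσ (le_max_right _ _)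
    _ = (max c 0 * m) • σ := smul_smul _ _ _

theorem Matrix.PosSemidef.re_trace_mul_nonneg {A B : Matrix n n 𝕜} (hA : A.PosSemidef)
    (hB : B.PosSemidef) : 0 ≤ RCLike.re (A * B).trace := by
  classical
  have hS : IsSelfAdjoint (CFC.sqrt B) := (CFC.sqrt_nonneg B).isSelfAdjoint
  rw [← CFC.sqrt_mul_sqrt_self B hB.nonneg, ← mul_assoc, trace_mul_comm, ← mul_assoc]
  nth_rw 1 [← hS.star_eq]
  exact (RCLike.nonneg_iff.mp (hA.conjTranspose_mul_mul_same _).trace_nonneg).1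

theorem Matrix.PosSemidef.re_trace_mul_le_of_le {ρ A B : Matrix n n 𝕜} (hρ : ρ.PosSemidef)
    (hAB : A ≤ B) : RCLike.re (ρ * A).trace ≤ RCLike.re (ρ * B).trace := by
  have := hρ.re_trace_mul_nonneg hAB
  rwa [mul_sub, trace_sub, map_sub, sub_nonneg] at this

/-- Expand `tr(ρ (sV - 1)ᴴ (sV - 1)) ≥ 0`. -/
theorem Matrix.PosSemidef.mul_re_trace_mul_add_conjTranspose_le {ρ : Matrix n n 𝕜}
    (hρ : ρ.PosSemidef) (V : Matrix n n 𝕜) (s : ℝ) :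
    s * RCLike.re (ρ * (V + Vᴴ)).trace ≤
      s ^ 2 * RCLike.re (ρ * (Vᴴ * V)).trace + RCLike.re ρ.trace := by
  classical
  have h := hρ.re_trace_mul_nonneg (posSemidef_conjTranspose_mul_self ((s : 𝕜) • V - 1))
  have hexp : ((s : 𝕜) • V - 1)ᴴ * ((s : 𝕜) • V - 1) =
      ((s ^ 2 : ℝ) : 𝕜) • (Vᴴ * V) - (s : 𝕜) • (V + Vᴴ) + 1 := by
    simp only [conjTranspose_sub, conjTranspose_smul, conjTranspose_one, RCLike.star_def,
      RCLike.conj_ofReal, sub_mul, mul_sub, smul_mul_assoc, mul_smul_comm, one_mul, mul_one,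
      smul_add]
    push_cast
    module
  rw [hexp, mul_add, mul_sub, trace_add, trace_sub, mul_one, mul_smul_comm, mul_smul_comm,
    trace_smul, trace_smul] at h
  simp only [map_add, map_sub, smul_eq_mul, RCLike.re_ofReal_mul] at h
  linarith

end MatrixOrder

theorem le_two_mul_add_mul_of_le_add_mul_succ {y : ℕ → ℝ} {a r S : ℝ} {k : ℕ} (ha : 0 ≤ a)
    (hr : 0 ≤ r) (hr2 : 2 * r ≤ 1) (hS : 0 ≤ S)
    (hstep : ∀ i, 1 ≤ i → i < k → y i ≤ a + r * y (i + 1)) (hlast : y k ≤ a + r * S)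
    {i : ℕ} (hi : 1 ≤ i) (hik : i ≤ k) : y i ≤ 2 * a + r * S := by
  induction hik using Nat.decreasingInduction with
  | self => linarith
  | of_succ j hj ih =>
    have h1 := mul_le_mul_of_nonneg_left (ih (by omega)) hr
    have h2 : r * r * S ≤ r * S := mul_le_mul_of_nonneg_right (by nlinarith) hS
    nlinarith [hstep j hi hj]

theorem sq_two_pow_mul_pow_le_succ {c : ℝ} (hc : 0 ≤ c) (j : ℕ) :
    ((2 : ℝ) ^ (2 ^ j - 1) * c ^ 2 ^ j) ^ 2 ≤ 2 ^ (2 ^ (j + 1) - 1) * c ^ 2 ^ (j + 1) := by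
  have h1 : 1 ≤ 2 ^ j := Nat.one_le_two_pow
  rw [mul_pow, ← pow_mul, ← pow_mul, pow_succ 2 j]
  gcongr
  · norm_num
  · omega

theorem sub_pos_of_lt_rpow {α T S c : ℝ} {k : ℕ} (hk : 1 ≤ k) (hα : 1 < α) (hT : 0 ≤ T)
    (hS : 0 ≤ S) (hc : 0 < c)
    (hcX : c < ((2 : ℝ) ^ ((1 : ℝ) - 2 ^ k) * (α / (α - 1)) * (T / S)) ^ (1 / ((2 : ℝ) ^ k - 1))) :
    0 < α * c * T - (α - 1) * 2 ^ (2 ^ k - 1) * c ^ (2 ^ k) * S := by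
  obtain ⟨N, hN⟩ : ∃ N, 2 ^ k = N + 1 := Nat.exists_eq_add_of_le' Nat.one_le_two_pow
  have hN0 : 0 < N := by
    have := Nat.pow_le_pow_right two_pos hk
    omega
  have hNr : (2 : ℝ) ^ k - 1 = N := by
    rw [sub_eq_iff_eq_add]
    exact_mod_cast hN
  have h2 : (2 : ℝ) ^ ((1 : ℝ) - 2 ^ k) = (2 ^ N)⁻¹ := by
    rw [show (1 : ℝ) - 2 ^ k = -N by linarith, Real.rpow_neg zero_le_two, Real.rpow_natCast]
  have hα1 : 0 < α - 1 := by linarith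
  set X := (2 ^ N)⁻¹ * (α / (α - 1)) * (T / S)
  have hX : 0 ≤ X := by
    have : 0 ≤ α / (α - 1) := div_nonneg (by linarith) hα1.le
    positivity
  rw [hNr, h2, one_div, Real.lt_rpow_inv_iff_of_pos hc.le hX (by exact_mod_cast hN0),
    Real.rpow_natCast] at hcX
  have hS0 : 0 < S := by
    refine hS.lt_of_ne fun h => ?_
    simp only [X, ← h, div_zero, mul_zero] at hcX
    exact (pow_pos hc N).not_gt hcX
  have key : (α - 1) * 2 ^ N * S * c ^ N < α * T :=
    calc (α - 1) * 2 ^ N * S * c ^ N < (α - 1) * 2 ^ N * S * X :=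
          mul_lt_mul_of_pos_left hcX (by positivity)
      _ = α * T := by simp only [X]; field_simp [hα1.ne']
  rw [hN, Nat.add_sub_cancel, pow_succ]
  nlinarith

theorem Matrix.posSemidef_ofReal_smul_one {n : Type*} [DecidableEq n] {x : ℝ} (hx : 0 ≤ x) :
    ((x : ℂ) • (1 : Matrix n n ℂ)).PosSemidef :=
  PosSemidef.one.smul (Complex.zero_le_real.mpr hx)

theorem Matrix.conjTranspose_ofReal_smul_one {n : Type*} [DecidableEq n] (x : ℝ) :
    ((x : ℂ) • (1 : Matrix n n ℂ))ᴴ = (x : ℂ) • 1 := by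
  simp [conjTranspose_smul]

theorem one_lt_alphaIM {k : ℕ} (hk : 1 ≤ k) : 1 < alphaIM k := by
  have : (1 : ℝ) < 2 ^ k := one_lt_pow₀ one_lt_two (by omega)
  exact lt_add_of_pos_right 1 (one_div_pos.mpr (by linarith))

section Qim
open scoped MatrixOrder

variable {n : Type*} [Fintype n]

theorem QimFeasible.re_trace_mul_le {k : ℕ} (hk : 1 ≤ k) {V : ℕ → Matrix n n ℂ}
    {Z : Matrix n n ℂ} (hF : QimFeasible k V Z) {ρ : Matrix n n ℂ} (hρ : ρ.PosSemidef) {s : ℝ}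
    (hs0 : 0 < s) (hs1 : s ≤ 1) :
    (ρ * (V 1 + (V 1)ᴴ)).trace.re / 2 ≤ ρ.trace.re / s + s / 2 * (ρ * Z).trace.re := by
  obtain ⟨hZ, -, hchain, hlast⟩ := hF
  set T := ρ.trace.re
  have hT : 0 ≤ T := (Complex.nonneg_iff.mp hρ.trace_nonneg).1
  set y := fun i => (ρ * (V i + (V i)ᴴ)).trace.re / 2
  have hamgm (i : ℕ) : y i ≤ T / (2 * s) + s / 2 * (ρ * ((V i)ᴴ * V i)).trace.re := by
    have := hρ.mul_re_trace_mul_add_conjTranspose_le (V i) s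
    simp only [RCLike.re_to_complex] at this
    rw [div_add' _ _ _ (by positivity), le_div_iff₀ (by positivity)]
    simp only [y, T]
    nlinarith
  have hstep (i : ℕ) (hi : 1 ≤ i) (hik : i < k) : y i ≤ T / (2 * s) + s / 2 * y (i + 1) := by
    have := hρ.re_trace_mul_le_of_le (le_iff.mpr (hchain i hi hik))
    rw [mul_smul_comm, trace_smul, smul_eq_mul, RCLike.re_to_complex, RCLike.re_to_complex,
      Complex.mul_re] at this
    refine (hamgm i).trans ?_
    gcongr
    norm_num at this
    simp only [y]
    linarith
  have hq : (ρ * ((V k)ᴴ * V k)).trace.re ≤ (ρ * Z).trace.re :=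
    hρ.re_trace_mul_le_of_le (le_iff.mpr hlast)
  have hlast' : y k ≤ T / (2 * s) + s / 2 * (ρ * Z).trace.re := (hamgm k).trans (by gcongr)
  have := le_two_mul_add_mul_of_le_add_mul_succ (by positivity) (by positivity) (by linarith)
    (hρ.re_trace_mul_nonneg hZ) hstep hlast' le_rfl hk
  rwa [RCLike.re_to_complex, show 2 * (T / (2 * s)) = T / s by field_simp] at this

theorem bddAbove_QimObj {k : ℕ} (hk : 1 ≤ k) {ρ σ : Matrix n n ℂ} (hρ : ρ.PosSemidef)
    (hσ : σ.PosSemidef) {l : ℝ} (hρσ : ρ ≤ l • σ) :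
    BddAbove {q : ℝ | ∃ V Z, QimFeasible k V Z ∧ q = QimObj k ρ σ V Z} := by
  set α := alphaIM k
  have hα : 1 < α := one_lt_alphaIM hk
  set L := max l 1
  have hL : 1 ≤ L := le_max_right _ _
  have hρL : ρ ≤ L • σ := hρσ.trans (smul_le_smul_of_nonneg_right (le_max_left _ _) hσ.nonneg)
  set s := (α - 1) / (α * L)
  have hs0 : 0 < s := div_pos (by linarith) (by positivity)
  have hs1 : s ≤ 1 := (div_le_one (by positivity)).mpr (by nlinarith)
  refine ⟨α * ρ.trace.re / s, ?_⟩
  rintro _ ⟨V, Z, hF, rfl⟩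
  set R := (σ * Z).trace.re
  have hR : 0 ≤ R := hσ.re_trace_mul_nonneg hF.1
  have hρZ : (ρ * Z).trace.re ≤ L * R :=
    calc (ρ * Z).trace.re = (Z * ρ).trace.re := by rw [trace_mul_comm]
      _ ≤ (Z * (L • σ)).trace.re := hF.1.re_trace_mul_le_of_le hρL
      _ = L * R := by rw [mul_smul_comm, trace_smul, trace_mul_comm]; simp [R]
  have hy1 := hF.re_trace_mul_le hk hρ hs0 hs1
  calc α * ((ρ * (V 1 + (V 1)ᴴ)).trace.re / 2) - (α - 1) * R
      ≤ α * (ρ.trace.re / s + s / 2 * (L * R)) - (α - 1) * R := by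
        gcongr
        exact hy1.trans (by gcongr)
    _ = α * ρ.trace.re / s - (α - 1) / 2 * R := by simp only [s]; field_simp; ring
    _ ≤ α * ρ.trace.re / s := by nlinarith

variable [DecidableEq n]

theorem qimFeasible_ofReal_smul_one {k : ℕ} {v : ℕ → ℝ} {z : ℝ} (hv1 : 0 ≤ v 1)
    (hv : ∀ i, 1 ≤ i → i < k → v i ^ 2 ≤ v (i + 1)) (hz : v k ^ 2 ≤ z) :
    QimFeasible k (fun i => (v i : ℂ) • (1 : Matrix n n ℂ)) ((z : ℂ) • 1) := by
  have hadd (x : ℝ) : (x : ℂ) • (1 : Matrix n n ℂ) + ((x : ℂ) • 1)ᴴ = ((2 * x : ℝ) : ℂ) • 1 := by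
    rw [conjTranspose_ofReal_smul_one]
    push_cast
    module
  have hsq (x y : ℝ) : (x : ℂ) • (1 : Matrix n n ℂ) - ((y : ℂ) • 1)ᴴ * ((y : ℂ) • 1) =
      ((x - y ^ 2 : ℝ) : ℂ) • 1 := by
    rw [conjTranspose_ofReal_smul_one, smul_mul_smul_comm, one_mul]
    push_cast
    module
  refine ⟨posSemidef_ofReal_smul_one (hz.trans' (sq_nonneg _)), ?_, fun i hi hik => ?_, ?_⟩
  · rw [hadd]
    exact posSemidef_ofReal_smul_one (by linarith)
  · beta_reduce
    rw [hadd, smul_smul, ← Complex.ofReal_ofNat, ← Complex.ofReal_inv, ← Complex.ofReal_mul,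
      inv_mul_cancel_left₀ two_ne_zero, hsq]
    exact posSemidef_ofReal_smul_one (by linarith [hv i hi hik])
  · rw [hsq]
    exact posSemidef_ofReal_smul_one (by linarith)

theorem QimObj_ofReal_smul_one (k : ℕ) (ρ σ : Matrix n n ℂ) (v : ℕ → ℝ) (z : ℝ) :
    QimObj k ρ σ (fun i => (v i : ℂ) • (1 : Matrix n n ℂ)) ((z : ℂ) • 1) =
      alphaIM k * v 1 * ρ.trace.re - (alphaIM k - 1) * z * σ.trace.re := by
  simp only [QimObj, conjTranspose_ofReal_smul_one, mul_add, mul_smul_comm, mul_one, trace_add,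
    trace_smul, smul_eq_mul, Complex.add_re, Complex.re_ofReal_mul]
  ring

theorem qimFeasible_two_pow_mul_pow {k : ℕ} (hk : 1 ≤ k) {c : ℝ} (hc : 0 ≤ c) :
    QimFeasible k
      (fun i => ((2 : ℂ) ^ (2 ^ (i - 1) - 1) * (c : ℂ) ^ (2 ^ (i - 1))) • (1 : Matrix n n ℂ))
      (((2 : ℂ) ^ (2 ^ k - 1) * (c : ℂ) ^ (2 ^ k)) • 1) := by
  have h := qimFeasible_ofReal_smul_one (n := n) (k := k)
    (v := fun i => 2 ^ (2 ^ (i - 1) - 1) * c ^ 2 ^ (i - 1)) (z := 2 ^ (2 ^ k - 1) * c ^ 2 ^ k)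
    (by positivity) (fun i hi _ => ?_) ?_
  · push_cast at h
    exact h
  · obtain ⟨j, rfl⟩ := Nat.exists_eq_add_of_le' hi
    exact sq_two_pow_mul_pow_le_succ hc j
  · obtain ⟨j, rfl⟩ := Nat.exists_eq_add_of_le' hk
    exact sq_two_pow_mul_pow_le_succ hc j

theorem QimObj_two_pow_mul_pow (k : ℕ) (ρ σ : Matrix n n ℂ) (c : ℝ) :
    QimObj k ρ σ
      (fun i => ((2 : ℂ) ^ (2 ^ (i - 1) - 1) * (c : ℂ) ^ (2 ^ (i - 1))) • (1 : Matrix n n ℂ))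
      (((2 : ℂ) ^ (2 ^ k - 1) * (c : ℂ) ^ (2 ^ k)) • 1) =
    alphaIM k * c * ρ.trace.re - (alphaIM k - 1) * 2 ^ (2 ^ k - 1) * c ^ (2 ^ k) * σ.trace.re := by
  have h := QimObj_ofReal_smul_one k ρ σ (fun i => 2 ^ (2 ^ (i - 1) - 1) * c ^ 2 ^ (i - 1))
    (2 ^ (2 ^ k - 1) * c ^ 2 ^ k)
  push_cast at h
  rw [h]
  ring

end Qim

/-- strict positivity of `Q^{im}_{α_k}(ρ‖σ)`, witnessed by explicit scalar
feasible points with strictly positive objective value. -/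
theorem stmt_19 (d k : ℕ) (hk : 1 ≤ k) (ρ σ : Matrix (Fin d) (Fin d) ℂ)
    (hρ : ρ.PosSemidef) (hρtr : ρ.trace = 1) (hσ : σ.PosSemidef) (hσ0 : σ ≠ 0)
    (hsupp : ∀ x : Fin d → ℂ, σ *ᵥ x = 0 → ρ *ᵥ x = 0) :
    0 < Qim k ρ σ ∧
    ∀ c : ℝ, 0 < c →
      c < ((2 : ℝ) ^ ((1 : ℝ) - 2 ^ k) * (alphaIM k / (alphaIM k - 1)) *
          (ρ.trace.re / σ.trace.re)) ^ (1 / ((2 : ℝ) ^ k - 1)) →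
      QimFeasible k
        (fun i => ((2 : ℂ) ^ (2 ^ (i - 1) - 1) * (c : ℂ) ^ (2 ^ (i - 1))) •
          (1 : Matrix (Fin d) (Fin d) ℂ))
        (((2 : ℂ) ^ (2 ^ k - 1) * (c : ℂ) ^ (2 ^ k)) • (1 : Matrix (Fin d) (Fin d) ℂ)) ∧
      0 < alphaIM k * c * ρ.trace.re -
          (alphaIM k - 1) * 2 ^ (2 ^ k - 1) * c ^ (2 ^ k) * σ.trace.re := by
  have hα := one_lt_alphaIM hk
  have hT : ρ.trace.re = 1 := by simp [hρtr]
  have hS : 0 < σ.trace.re := (Complex.pos_iff.mp (hσ.trace_nonneg.lt_of_ne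
    (Ne.symm (hσ.trace_eq_zero_iff.not.mpr hσ0)))).1
  have hT0 : 0 ≤ ρ.trace.re := hT ▸ zero_le_one
  refine ⟨?_, fun c hc hcX =>
    ⟨qimFeasible_two_pow_mul_pow hk hc.le, sub_pos_of_lt_rpow hk hα hT0 hS.le hc hcX⟩⟩
  set X := (2 : ℝ) ^ ((1 : ℝ) - 2 ^ k) * (alphaIM k / (alphaIM k - 1)) * (ρ.trace.re / σ.trace.re)
  have hX : 0 < X := by
    have : 0 < alphaIM k / (alphaIM k - 1) := div_pos (by linarith) (by linarith)
    simp only [X, hT]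
    positivity
  have hc : 0 < X ^ (1 / ((2 : ℝ) ^ k - 1)) / 2 := by positivity
  have hpos := sub_pos_of_lt_rpow hk hα hT0 hS.le hc (half_lt_self (by positivity))
  rw [← QimObj_two_pow_mul_pow] at hpos
  obtain ⟨l, hl⟩ := hρ.exists_le_smul_of_ker_le hσ hsupp
  exact hpos.trans_le (le_csSup (bddAbove_QimObj hk hρ hσ hl)
    ⟨_, _, qimFeasible_two_pow_mul_pow hk hc.le, rfl⟩)
end
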